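/- arXiv:1810.09829 — 3 statements merged into one kernel-verified Lean document; each statement's English description precedes it below -/
import Mathlib

section
/- For any x > 0, the function f(p) = p·x·e^{-βp}/(1 + x·e^{-βp}) with β > 0 attains its maximum at p* = (1 + W(x/e))/β, where W is the Lambert-W function, and the maximum value is W(x/e)/β. -/
/-- For any x > 0 and β > 0, the function f(p) = p·x·e^{-βp}/(1 + x·e^{-βp})
attains its maximum at p* = (1 + W(x/e))/β, with maximum value W(x/e)/β,
where W is the principal Lambert-W function: W(y) is the unique w ≥ 0 with
w·e^w = y for y ≥ 0. -/
theorem stmt0 (β x : ℝ) (hβ : 0 < β) (hx : 0 < x)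
    (W : ℝ → ℝ)
    (hW : ∀ y, 0 ≤ y → 0 ≤ W y ∧ W y * Real.exp (W y) = y)
    (hWuniq : ∀ y w, 0 ≤ w → w * Real.exp w = y → W y = w)
    (f : ℝ → ℝ)
    (hf : ∀ p, f p = p * x * Real.exp (-β * p) / (1 + x * Real.exp (-β * p)))
    (pstar : ℝ) (hp : pstar = (1 + W (x / Real.exp 1)) / β) :
    (∀ p : ℝ, f p ≤ f pstar) ∧ f pstar = W (x / Real.exp 1) / β := by
  have hxe : 0 < x / Real.exp 1 := div_pos hx (Real.exp_pos 1)
  obtain ⟨hw0, hwe⟩ := hW (x / Real.exp 1) hxe.le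
  set w := W (x / Real.exp 1) with hwdef
  have hwpos : 0 < w := by
    rcases hw0.eq_or_lt with h | h
    · exfalso; rw [← h] at hwe; simp at hwe; linarith
    · exact h
  have hx_eq : x = w * Real.exp (w + 1) := by
    rw [eq_div_iff (Real.exp_pos 1).ne'] at hwe
    rw [Real.exp_add, ← mul_assoc]
    exact hwe.symm
  have h1 : x * Real.exp (-β * pstar) = w := by
    have harg : -β * pstar = -(w + 1) := by
      rw [hp]; field_simp; ring
    rw [harg, hx_eq, mul_assoc, ← Real.exp_add,
      show w + 1 + -(w + 1) = (0:ℝ) from by ring, Real.exp_zero, mul_one]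
  have h1w : (0:ℝ) < 1 + w := by linarith
  have hfps : f pstar = w / β := by
    rw [hf, mul_assoc, h1, hp]
    field_simp
  refine ⟨fun p => ?_, hfps⟩
  rw [hf, hfps]
  set t := x * Real.exp (-β * p) with ht
  have htpos : 0 < t := mul_pos hx (Real.exp_pos _)
  have hden : (0:ℝ) < 1 + t := by linarith
  rw [div_le_div_iff₀ hden hβ]
  have hβp : β * p = Real.log x - Real.log t := by
    rw [ht, Real.log_mul hx.ne' (Real.exp_pos _).ne', Real.log_exp]; ring
  have hlogx : Real.log x = Real.log w + (w + 1) := by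
    rw [hx_eq, Real.log_mul hwpos.ne' (Real.exp_pos _).ne', Real.log_exp]
  have key : Real.log w - Real.log t ≤ w / t - 1 := by
    have h := Real.log_le_sub_one_of_pos (div_pos hwpos htpos)
    rwa [Real.log_div hwpos.ne' htpos.ne'] at h
  have key2 : t * (Real.log w - Real.log t) ≤ w - t := by
    have h := mul_le_mul_of_nonneg_left key htpos.le
    calc t * (Real.log w - Real.log t) ≤ t * (w / t - 1) := h
      _ = w - t := by field_simp
  have hpt : p * x * Real.exp (-β * p) * β = (β * p) * t := by rw [ht]; ring
  rw [hpt, hβp, hlogx]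
  nlinarith [key2]
end

section
/- If p* = (1 + W(A/e))/β with A > 0 and β > 0, then p*·A·e^{-βp*}/(1 + A·e^{-βp*}) = W(A/e)/β = p* − 1/β. -/
/-- If p* = (1 + W(A/e))/β with A > 0 and β > 0, then
p*·A·e^{-βp*}/(1 + A·e^{-βp*}) = W(A/e)/β = p* − 1/β. -/
theorem stmt1 (A β : ℝ) (hA : 0 < A) (hβ : 0 < β)
    (W : ℝ → ℝ)
    (hW : ∀ y, 0 ≤ y → 0 ≤ W y ∧ W y * Real.exp (W y) = y)
    (pstar : ℝ) (hp : pstar = (1 + W (A / Real.exp 1)) / β) :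
    pstar * A * Real.exp (-β * pstar) / (1 + A * Real.exp (-β * pstar))
        = W (A / Real.exp 1) / β ∧
    W (A / Real.exp 1) / β = pstar - 1 / β := by
  obtain ⟨hw0, hwe⟩ := hW (A / Real.exp 1)
    (div_nonneg hA.le (Real.exp_pos 1).le)
  set w := W (A / Real.exp 1) with hwdef
  have hbp : β * pstar = 1 + w := by
    rw [hp]; field_simp
  have hA' : A = w * Real.exp w * Real.exp 1 := by
    field_simp at hwe
    linarith [hwe]
  have hkey : A * Real.exp (-β * pstar) = w := by
    rw [hA', neg_mul, hbp, Real.exp_neg, Real.exp_add]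
    have h1 := Real.exp_pos 1
    have h2 := Real.exp_pos w
    field_simp
  have h1w : (0:ℝ) < 1 + w := by linarith
  constructor
  · rw [mul_assoc, hkey, hp]
    field_simp
  · rw [hp]; field_simp; ring
end

section
/- The function A(x) = Σ_{i<j} (θ_i^{1/γ_ij} x_i + θ_j^{1/γ_ij} x_j)^{γ_ij} on {0,1}^n is submodular: for all x ≤ x' (componentwise) and any index k with x_k = x'_k = 0, A(x + e_k) − A(x) ≥ A(x' + e_k) − A(x'). -/
open Finset

lemma subadd_rpow (a b p : ℝ) (ha : 0 ≤ a) (hb : 0 ≤ b) (hp : 0 ≤ p) (hp1 : p ≤ 1) :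
    (a + b) ^ p ≤ a ^ p + b ^ p := by
  lift a to NNReal using ha
  lift b to NNReal using hb
  have := NNReal.rpow_add_le_add_rpow a b hp hp1
  exact_mod_cast this

lemma step_lem (a b p u v : ℝ) (ha : 0 ≤ a) (hb : 0 ≤ b) (hp : 0 < p) (hp1 : p ≤ 1)
    (hu : u = 0 ∨ u = 1) (hv : v = 0 ∨ v = 1) (huv : u ≤ v) :
    (a + b * v) ^ p - (b * v) ^ p ≤ (a + b * u) ^ p - (b * u) ^ p := by
  rcases hu with hu | hu <;> rcases hv with hv | hv <;> subst hu hv <;> try linarith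
  · simp only [mul_zero, mul_one, add_zero]
    rw [Real.zero_rpow hp.ne']
    have := subadd_rpow a b p ha hb hp.le hp1
    linarith

/-- A(x) = Σ_{i<j} (θ_i^{1/γ_ij} x_i + θ_j^{1/γ_ij} x_j)^{γ_ij} on {0,1}^n is
submodular: for x ≤ x' componentwise and any k with x_k = x'_k = 0,
A(x + e_k) − A(x) ≥ A(x' + e_k) − A(x'). -/
theorem stmt14 (n : ℕ) (θ : Fin n → ℝ) (γ : Fin n → Fin n → ℝ)
    (hθ : ∀ i, 0 < θ i)
    (hγ : ∀ i j : Fin n, i < j → 0 < γ i j ∧ γ i j ≤ 1)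
    (x x' : Fin n → ℝ)
    (hx : ∀ i, x i = 0 ∨ x i = 1) (hx' : ∀ i, x' i = 0 ∨ x' i = 1)
    (hle : ∀ i, x i ≤ x' i)
    (k : Fin n) (hk : x k = 0) (hk' : x' k = 0)
    (A : (Fin n → ℝ) → ℝ)
    (hA : ∀ z : Fin n → ℝ, A z = ∑ i, ∑ j, if i < j then
        (θ i ^ (1 / γ i j) * z i + θ j ^ (1 / γ i j) * z j) ^ γ i j else 0) :
    A (Function.update x' k 1) - A x' ≤ A (Function.update x k 1) - A x := by
  rw [hA, hA, hA, hA, ← Finset.sum_sub_distrib, ← Finset.sum_sub_distrib]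
  apply Finset.sum_le_sum
  intro i _
  rw [← Finset.sum_sub_distrib, ← Finset.sum_sub_distrib]
  apply Finset.sum_le_sum
  intro j _
  by_cases hij : i < j
  · simp only [hij, if_true]
    obtain ⟨hp, hp1⟩ := hγ i j hij
    have ha : (0:ℝ) ≤ θ i ^ (1 / γ i j) := (Real.rpow_pos_of_pos (hθ i) _).le
    have hb : (0:ℝ) ≤ θ j ^ (1 / γ i j) := (Real.rpow_pos_of_pos (hθ j) _).le
    by_cases hik : i = k
    · subst hik
      have hjk : j ≠ i := hij.ne'
      simp only [Function.update_self, Function.update_of_ne hjk, hk, hk', mul_zero,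
        zero_add, mul_one]
      have := step_lem (θ i ^ (1 / γ i j)) (θ j ^ (1 / γ i j)) (γ i j) (x j) (x' j)
        ha hb hp hp1 (hx j) (hx' j) (hle j)
      linarith
    · by_cases hjk : j = k
      · subst hjk
        simp only [Function.update_self, Function.update_of_ne hik, hk, hk', mul_zero,
          add_zero, mul_one]
        have := step_lem (θ j ^ (1 / γ i j)) (θ i ^ (1 / γ i j)) (γ i j) (x i) (x' i)
          hb ha hp hp1 (hx i) (hx' i) (hle i)
        rw [add_comm (θ j ^ (1 / γ i j))] at this
        rw [add_comm (θ j ^ (1 / γ i j))] at this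
        linarith
      · simp only [Function.update_of_ne hik, Function.update_of_ne hjk]
        exact le_of_eq (by ring)
  · simp [hij]
end
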